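/- The Malvenuto–Reutenauer coproduct Δ_MR(σ) = Σ_{i=0}^n st(σ(1)⋯σ(i)) ⊗ st(σ(i+1)⋯σ(n)) on ⊕_n K[Σ_n] is coassociative: (Δ_MR ⊗ id) ∘ Δ_MR = (id ⊗ Δ_MR) ∘ Δ_MR. -/
import Mathlib


open TensorProduct

/-- A word `w` (in one-line notation) is a permutation of `{1, …, w.length}`. -/
def IsPermWord (w : List ℕ) : Prop := w.Perm (List.range' 1 w.length)

/-- Standardization of a word. -/
def stw (X : List ℕ) : List ℕ :=
  (List.range X.length).map (fun i =>
    (((List.range X.length).filter (fun j =>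
      X.getD j 0 < X.getD i 0 ∨ (X.getD j 0 = X.getD i 0 ∧ j < i))).length) + 1)



/-- The word predicate underlying standardization. -/
def wpred (X : List ℕ) (j i : ℕ) : Prop :=
  X.getD j 0 < X.getD i 0 ∨ (X.getD j 0 = X.getD i 0 ∧ j < i)

/-- Encoding of a letter/position pair as a single natural. -/
def ew (X : List ℕ) (i : ℕ) : ℕ := X.getD i 0 * X.length + i

lemma ew_lt_iff (X : List ℕ) {i j : ℕ} (hi : i < X.length) (hj : j < X.length) :
    ew X j < ew X i ↔ wpred X j i := by
  unfold ew wpred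
  set a := X.getD j 0
  set b := X.getD i 0
  rcases lt_trichotomy a b with h | h | h
  · simp only [h, true_or, iff_true]
    calc a * X.length + j < a * X.length + X.length := by omega
    _ = (a+1) * X.length := by ring
    _ ≤ b * X.length := Nat.mul_le_mul_right _ (by omega)
    _ ≤ b * X.length + i := by omega
  · rw [h]; constructor <;> intro hh <;> omega
  · constructor
    · intro hh
      exfalso
      have : b * X.length + X.length ≤ a * X.length := by
        have := Nat.mul_le_mul_right X.length (show b + 1 ≤ a by omega)
        calc b * X.length + X.length = (b+1) * X.length := by ring
        _ ≤ a * X.length := this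
      omega
    · intro hh; omega

/-- The rank of position `i` in word `X`. -/
def rk (X : List ℕ) (i : ℕ) : ℕ :=
  (((List.range X.length).filter (fun j => ew X j < ew X i))).length

example (n : ℕ) (q : ℕ → Prop) [DecidablePred q] :
    ((List.range n).filter (fun j => decide (q j))).length
      = ((Finset.range n).filter q).card := rfl

lemma rk_eq_card (X : List ℕ) (i : ℕ) :
    rk X i = ((Finset.range X.length).filter (fun m => ew X m < ew X i)).card := rfl

lemma rk_lt_rk_iff (X : List ℕ) {i j : ℕ} (hi : i < X.length) (hj : j < X.length) :
    rk X j < rk X i ↔ ew X j < ew X i := by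
  rw [rk_eq_card, rk_eq_card]
  constructor
  · intro h
    by_contra hc
    push_neg at hc
    have hsub : (Finset.range X.length).filter (fun m => ew X m < ew X i)
        ⊆ (Finset.range X.length).filter (fun m => ew X m < ew X j) := by
      intro m hm
      simp only [Finset.mem_filter] at *
      exact ⟨hm.1, lt_of_lt_of_le hm.2 hc⟩
    exact absurd (Finset.card_le_card hsub) (by omega)
  · intro h
    apply Finset.card_lt_card
    constructor
    · intro m hm
      simp only [Finset.mem_filter] at *
      exact ⟨hm.1, lt_trans hm.2 h⟩
    · intro hsub
      have : j ∈ (Finset.range X.length).filter (fun m => ew X m < ew X i) := by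
        simp [Finset.mem_filter, hj, h]
      have := hsub this
      simp [Finset.mem_filter] at this

lemma ew_inj (X : List ℕ) {i j : ℕ} (hi : i < X.length) (hj : j < X.length)
    (h : ew X j = ew X i) : j = i := by
  unfold ew at h
  rcases lt_trichotomy (X.getD j 0) (X.getD i 0) with hc | hc | hc
  · have := (ew_lt_iff X hi hj).mpr (Or.inl hc); unfold ew at this; omega
  · rw [hc] at h; omega
  · have := (ew_lt_iff X hj hi).mpr (Or.inl hc); unfold ew at this; omega

lemma rk_eq_rk_iff (X : List ℕ) {i j : ℕ} (hi : i < X.length) (hj : j < X.length) :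
    rk X j = rk X i ↔ j = i := by
  constructor
  · intro h
    rcases lt_trichotomy (ew X j) (ew X i) with hc | hc | hc
    · have := (rk_lt_rk_iff X hi hj).mpr hc; omega
    · exact ew_inj X hi hj hc
    · have := (rk_lt_rk_iff X hj hi).mpr hc; omega
  · intro h; rw [h]

lemma stw_length (X : List ℕ) : (stw X).length = X.length := by simp [stw]

lemma stw_getD (X : List ℕ) {i : ℕ} (hi : i < X.length) :
    (stw X).getD i 0 = rk X i + 1 := by
  have hlen : i < (stw X).length := by rw [stw_length]; exact hi
  rw [List.getD_eq_getElem _ _ hlen]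
  simp only [stw, List.getElem_map, List.getElem_range]
  congr 1
  unfold rk
  congr 1
  apply List.filter_congr
  intro j hj
  rw [List.mem_range] at hj
  simp only [decide_eq_decide]
  exact ((ew_lt_iff X hi hj)).symm


lemma stw_congr {X Y : List ℕ} (hlen : X.length = Y.length)
    (h : ∀ i < X.length, ∀ j < X.length, (wpred X j i ↔ wpred Y j i)) : stw X = stw Y := by
  unfold stw
  rw [← hlen]
  apply List.map_congr_left
  intro i hi
  rw [List.mem_range] at hi
  congr 1
  refine congrArg List.length (List.filter_congr ?_)
  intro j hj
  rw [List.mem_range] at hj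
  simp only [decide_eq_decide]
  exact h i hi j hj

lemma wpred_take (X : List ℕ) (i : ℕ) {a b : ℕ} (ha : a < (X.take i).length)
    (hb : b < (X.take i).length) : wpred (X.take i) b a ↔ wpred X b a := by
  unfold wpred
  rw [List.length_take] at ha hb
  rw [List.getD_eq_getElem _ _ (by simp [List.length_take]; omega : a < (X.take i).length),
    List.getD_eq_getElem _ _ (by simp [List.length_take]; omega : b < (X.take i).length),
    List.getElem_take, List.getElem_take,
    ← List.getD_eq_getElem X 0 (by omega : a < X.length),
    ← List.getD_eq_getElem X 0 (by omega : b < X.length)]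

lemma wpred_drop (X : List ℕ) (i : ℕ) {a b : ℕ} (ha : a < (X.drop i).length)
    (hb : b < (X.drop i).length) : wpred (X.drop i) b a ↔ wpred X (i + b) (i + a) := by
  unfold wpred
  rw [List.length_drop] at ha hb
  rw [List.getD_eq_getElem _ _ (by simp [List.length_drop]; omega : a < (X.drop i).length),
    List.getD_eq_getElem _ _ (by simp [List.length_drop]; omega : b < (X.drop i).length),
    List.getElem_drop, List.getElem_drop,
    ← List.getD_eq_getElem X 0 (by omega : i + a < X.length),
    ← List.getD_eq_getElem X 0 (by omega : i + b < X.length)]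
  constructor <;> intro h <;> rcases h with h | ⟨h1, h2⟩
  · exact Or.inl h
  · exact Or.inr ⟨h1, by omega⟩
  · exact Or.inl h
  · exact Or.inr ⟨h1, by omega⟩

lemma wpred_stw (X : List ℕ) {i j : ℕ} (hi : i < X.length) (hj : j < X.length) :
    wpred (stw X) j i ↔ wpred X j i := by
  have lhs : wpred (stw X) j i ↔
      (rk X j + 1 < rk X i + 1 ∨ (rk X j + 1 = rk X i + 1 ∧ j < i)) := by
    unfold wpred
    rw [stw_getD X hi, stw_getD X hj]
  rw [lhs, ← ew_lt_iff X hi hj]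
  constructor
  · intro h
    rcases h with h | ⟨h1, h2⟩
    · exact (rk_lt_rk_iff X hi hj).mp (by omega)
    · have := (rk_eq_rk_iff X hi hj).mp (by omega); omega
  · intro h
    exact Or.inl (Nat.add_lt_add_right ((rk_lt_rk_iff X hi hj).mpr h) 1)

lemma stw_take_stw (X : List ℕ) (i : ℕ) : stw ((stw X).take i) = stw (X.take i) := by
  apply stw_congr
  · simp [stw_length]
  · intro a ha b hb
    have hlen : ((stw X).take i).length = min i X.length := by simp [stw_length]
    rw [hlen] at ha hb
    have ha' : a < X.length := by omega
    have hb' : b < X.length := by omega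
    rw [wpred_take _ _ (by rw [hlen]; omega) (by rw [hlen]; omega),
      wpred_stw X ha' hb',
      ← wpred_take X i (by simp [List.length_take]; omega) (by simp [List.length_take]; omega)]

lemma stw_drop_stw (X : List ℕ) (i : ℕ) : stw ((stw X).drop i) = stw (X.drop i) := by
  apply stw_congr
  · simp [stw_length]
  · intro a ha b hb
    have hlen : ((stw X).drop i).length = X.length - i := by simp [stw_length]
    rw [hlen] at ha hb
    rw [wpred_drop _ _ (by rw [hlen]; omega) (by rw [hlen]; omega),
      wpred_stw X (by omega) (by omega),
      ← wpred_drop X i (by simp [List.length_drop]; omega) (by simp [List.length_drop]; omega)]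



lemma sum_triangle {M : Type*} [AddCommMonoid M] (n : ℕ) (f : ℕ → ℕ → M) :
    ∑ j ∈ Finset.range (n + 1), ∑ i ∈ Finset.range (j + 1), f i j
      = ∑ i ∈ Finset.range (n + 1), ∑ k ∈ Finset.range (n - i + 1), f i (i + k) := by
  induction n with
  | zero => simp
  | succ n ih =>
    rw [Finset.sum_range_succ, ih,
      Finset.sum_range_succ (fun i => ∑ k ∈ Finset.range (n + 1 - i + 1), f i (i + k)) (n + 1)]
    have hlast : ∑ k ∈ Finset.range (n + 1 - (n + 1) + 1), f (n + 1) ((n + 1) + k)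
        = f (n + 1) (n + 1) := by simp
    have hsplit : ∀ i ∈ Finset.range (n + 1),
        ∑ k ∈ Finset.range (n + 1 - i + 1), f i (i + k)
          = (∑ k ∈ Finset.range (n - i + 1), f i (i + k)) + f i (n + 1) := by
      intro i hi
      rw [Finset.mem_range] at hi
      have h1 : n + 1 - i + 1 = (n - i + 1) + 1 := by omega
      rw [h1, Finset.sum_range_succ]
      have : i + (n - i + 1) = n + 1 := by omega
      rw [this]
    rw [Finset.sum_congr rfl hsplit, Finset.sum_add_distrib, hlast,
      Finset.sum_range_succ (fun i => f i (n + 1)) (n + 1)]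
    abel


/-- The Malvenuto–Reutenauer coproduct of a basis word:
`Δ_MR(σ) = Σ_{i=0}^n st(σ(1)…σ(i)) ⊗ st(σ(i+1)…σ(n))`. -/
noncomputable def mrCop (K : Type*) [Field K] (w : List ℕ) :
    TensorProduct K (List ℕ →₀ K) (List ℕ →₀ K) :=
  ∑ i ∈ Finset.range (w.length + 1),
    Finsupp.single (stw (w.take i)) (1 : K) ⊗ₜ[K] Finsupp.single (stw (w.drop i)) (1 : K)

/-- The linear extension of `mrCop` to the free `K`-vector space on words. -/
noncomputable def mrCopL (K : Type*) [Field K] :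
    (List ℕ →₀ K) →ₗ[K] TensorProduct K (List ℕ →₀ K) (List ℕ →₀ K) :=
  Finsupp.lsum K fun w => (LinearMap.id : K →ₗ[K] K).smulRight (mrCop K w)

set_option synthInstance.maxHeartbeats 1000000 in
set_option maxHeartbeats 1000000 in
/-- the Malvenuto–Reutenauer coproduct is coassociative:
`(Δ_MR ⊗ id) ∘ Δ_MR = (id ⊗ Δ_MR) ∘ Δ_MR` (checked on basis elements, via the
canonical associator of the tensor product). -/
theorem mrCop_coassoc (K : Type*) [Field K] (w : List ℕ) (hw : IsPermWord w) :
    (TensorProduct.assoc K (List ℕ →₀ K) (List ℕ →₀ K) (List ℕ →₀ K))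
        ((TensorProduct.map (mrCopL K) LinearMap.id) (mrCop K w))
      = (TensorProduct.map LinearMap.id (mrCopL K)) (mrCop K w) := by
  simp only [mrCop, map_sum, TensorProduct.map_tmul, LinearMap.id_coe, id_eq, mrCopL,
    Finsupp.lsum_single, LinearMap.smulRight_apply, LinearMap.id_apply, one_smul,
    TensorProduct.sum_tmul, TensorProduct.tmul_sum, TensorProduct.assoc_tmul]
  trans ∑ j ∈ Finset.range (w.length + 1), ∑ i ∈ Finset.range (j + 1),
      (Finsupp.single (stw (w.take i)) (1 : K)) ⊗ₜ[K]
        ((Finsupp.single (stw ((w.drop i).take (j - i))) (1 : K)) ⊗ₜ[K]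
          (Finsupp.single (stw (w.drop j)) (1 : K)))
  · apply Finset.sum_congr rfl
    intro j hj
    rw [Finset.mem_range] at hj
    have hlen : (stw (w.take j)).length = j := by
      rw [stw_length, List.length_take]; omega
    rw [hlen]
    apply Finset.sum_congr rfl
    intro i hi
    rw [Finset.mem_range] at hi
    rw [stw_take_stw, stw_drop_stw, List.take_take, List.drop_take,
      min_eq_left (by omega : i ≤ j)]
  · rw [sum_triangle]
    apply Finset.sum_congr rfl
    intro i hi
    rw [Finset.mem_range] at hi
    have hlen : (stw (w.drop i)).length = w.length - i := by
      rw [stw_length, List.length_drop]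
    rw [hlen]
    apply Finset.sum_congr rfl
    intro k hk
    rw [stw_take_stw, stw_drop_stw, List.drop_drop, Nat.add_sub_cancel_left]
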